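/- Let w and w' be two odd closed walks in a signed graph (G,τ) with the same first vertex. Then both w + w' and w⁻¹ + w' are even closed walks, and the associated binomials satisfy B_{w⁻¹ + w'} = ± B_{w + w'}. -/

import Mathlib

variable {V : Type*}

/-- The product of τ(e,u)·τ(e,v) over all edge terms e = uv of a walk in a signed
graph (G,τ), where the sign τ assigns a unit ±1 to each incidence. -/
def walkSign (G : SimpleGraph V) (τ : Sym2 V → V → ℤˣ) :
    {u v : V} → G.Walk u v → ℤˣ
  | _, _, SimpleGraph.Walk.nil => 1
  | _, _, @SimpleGraph.Walk.cons _ _ a b _ _ p =>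
      τ s(a, b) a * τ s(a, b) b * walkSign G τ p

/-- μ of a closed walk: (-1)^(number of unbalanced vertex terms). -/
def mu (G : SimpleGraph V) (τ : Sym2 V → V → ℤˣ) {u v : V} (w : G.Walk u v) : ℤˣ :=
  (-1) ^ w.length * walkSign G τ w

/-- The i-th dart (oriented edge term) of a walk. -/
def dartAt {G : SimpleGraph V} {u v : V} (w : G.Walk u v) (i : Fin w.length) :
    G.Dart :=
  w.darts.get (Fin.cast w.length_darts.symm i)

/-- Cyclic successor on `Fin n`. -/
def csucc {n : ℕ} (i : Fin n) : Fin n := ⟨(i + 1) % n, Nat.mod_lt _ i.pos⟩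

/-- `FlipRel G τ w κ`: κ assigns a sign ±1 to each edge term of the closed walk w,
flipping exactly at the unbalanced vertex terms (cyclically).  Such a κ records (up
to a global sign) the parity of the balanced section containing each edge term in the
balanced section-decomposition of w, and a κ satisfying this relation exists iff w is
even. -/
def FlipRel (G : SimpleGraph V) (τ : Sym2 V → V → ℤˣ) {v : V} (w : G.Walk v v)
    (κ : Fin w.length → ℤˣ) : Prop :=
  ∀ i : Fin w.length,
    κ (csucc i) =
      -(τ (dartAt w i).edge (dartAt w i).toProd.2 *
          τ (dartAt w (csucc i)).edge (dartAt w i).toProd.2) * κ i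

open MvPolynomial in
/-- The positive monomial B_w⁺ of the binomial associated with an even closed walk w,
relative to the section-parity assignment κ: the product of all edge terms lying in
the sections with κ = 1. -/
noncomputable def Bpos (K : Type*) [Field K] {G : SimpleGraph V} {v : V}
    (w : G.Walk v v) (κ : Fin w.length → ℤˣ) : MvPolynomial G.edgeSet K :=
  ∏ i ∈ Finset.univ.filter (fun i => κ i = 1),
    X (⟨(dartAt w i).edge, (dartAt w i).edge_mem⟩ : G.edgeSet)

open MvPolynomial in
/-- The negative monomial B_w⁻: the product of all edge terms in sections with κ = -1. -/
noncomputable def Bneg (K : Type*) [Field K] {G : SimpleGraph V} {v : V}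
    (w : G.Walk v v) (κ : Fin w.length → ℤˣ) : MvPolynomial G.edgeSet K :=
  ∏ i ∈ Finset.univ.filter (fun i => κ i = -1),
    X (⟨(dartAt w i).edge, (dartAt w i).edge_mem⟩ : G.edgeSet)

open MvPolynomial in
/-- The toric ideal I_{(G,τ)} of a signed graph: the ideal of K[e : e ∈ E(G)]
generated by the binomials e^{b⁺} - e^{b⁻} over integer vectors b in the kernel of
the incidence matrix A(G,τ). -/
noncomputable def toricIdeal (K : Type*) [Field K] [DecidableEq V]
    (G : SimpleGraph V) [Fintype G.edgeSet] (τ : Sym2 V → V → ℤˣ) :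
    Ideal (MvPolynomial G.edgeSet K) :=
  Ideal.span { f | ∃ b : G.edgeSet → ℤ,
    (∀ v : V, ∑ e : G.edgeSet,
      (if v ∈ (e : Sym2 V) then (τ e v : ℤ) else 0) * b e = 0) ∧
    f = (∏ e : G.edgeSet, X e ^ (b e).toNat)
      - ∏ e : G.edgeSet, X e ^ (-(b e)).toNat }

/-!
A flip relation determines κ up to a global sign: along any walk, κ i times the explicit
section sign `s i = (-1)^i · (∏_{k<i} τ(e_k, tail) τ(e_k, head)) · τ(e_i, tail)` is constant,
because both factors flip by the same sign at every inner vertex term.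

Reading `w⁻¹ + w'` against `w + w'` with the first `n = |w|` positions reversed (position
`i < n` ↦ `n - 1 - i`) keeps the edge at every position. On the `w'` part the section signs
agree because `w` and `w⁻¹` have the same sign; on the `w` part their product is
`(-1)^(n-1) · sign(w) = -μ(w) = 1`. Hence `κ₂ = ±κ₁ ∘ σ`, so the two binomials agree up to
exchanging `B⁺` and `B⁻`.
-/

lemma List.prod_take_mul_getElem_mul_prod_take_reverse {M : Type*} [CommMonoid M] (L : List M)
    (k : ℕ) (hk : k < L.length) :
    (L.take k).prod * L[k] * (L.reverse.take (L.length - 1 - k)).prod = L.prod := by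
  rw [← List.prod_take_succ _ _ hk, List.take_reverse, List.prod_reverse,
    show L.length - (L.length - 1 - k) = k + 1 by omega, List.prod_take_mul_prod_drop]

namespace SignedGraph

open SimpleGraph

variable {G : SimpleGraph V} {τ : Sym2 V → V → ℤˣ} {v x : V}

def dartSign (τ : Sym2 V → V → ℤˣ) (d : G.Dart) : ℤˣ :=
  τ d.edge d.fst * τ d.edge d.snd

@[simp]
lemma dartSign_symm (d : G.Dart) : dartSign τ d.symm = dartSign τ d := by
  simp [dartSign, mul_comm]

lemma walkSign_eq_prod_map_darts {a b : V} (p : G.Walk a b) :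
    walkSign G τ p = (p.darts.map (dartSign τ)).prod := by
  induction p with
  | nil => rfl
  | cons h p ih => simp [walkSign, ih, dartSign]

lemma walkSign_append {a b c : V} (p : G.Walk a b) (q : G.Walk b c) :
    walkSign G τ (p.append q) = walkSign G τ p * walkSign G τ q := by
  simp [walkSign_eq_prod_map_darts]

lemma walkSign_reverse {a b : V} (p : G.Walk a b) :
    walkSign G τ p.reverse = walkSign G τ p := by
  simp [walkSign_eq_prod_map_darts, Function.comp_def]

lemma mu_append {a b c : V} (p : G.Walk a b) (q : G.Walk b c) :
    mu G τ (p.append q) = mu G τ p * mu G τ q := by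
  simp only [mu, Walk.length_append, walkSign_append, pow_add]
  exact mul_mul_mul_comm _ _ _ _

lemma mu_reverse {a b : V} (p : G.Walk a b) : mu G τ p.reverse = mu G τ p := by
  simp [mu, walkSign_reverse]

lemma dartAt_succ_fst {a b : V} (p : G.Walk a b) (i : Fin p.length)
    (hi : (i : ℕ) + 1 < p.length) : (dartAt p ⟨i + 1, hi⟩).fst = (dartAt p i).snd :=
  (List.isChain_iff_getElem.mp p.isChain_dartAdj_darts i (by simpa using hi)).symm

def sectionSign (τ : Sym2 V → V → ℤˣ) {a b : V} (p : G.Walk a b) (i : Fin p.length) : ℤˣ :=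
  (-1) ^ (i : ℕ) * ((p.darts.take i).map (dartSign τ)).prod *
    τ (dartAt p i).edge (dartAt p i).fst

lemma sectionSign_succ {a b : V} (p : G.Walk a b) (i : Fin p.length)
    (hi : (i : ℕ) + 1 < p.length) :
    sectionSign τ p ⟨i + 1, hi⟩ = -(τ (dartAt p i).edge (dartAt p i).snd *
      τ (dartAt p ⟨i + 1, hi⟩).edge (dartAt p i).snd) * sectionSign τ p i := by
  simp only [sectionSign, dartAt_succ_fst, List.map_take]
  rw [List.prod_take_succ _ _ (by simp), List.getElem_map, pow_succ]
  change _ * (_ * dartSign τ (dartAt p i)) * _ = _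
  simp only [dartSign, neg_mul, mul_neg, mul_one, neg_inj]
  ac_rfl

lemma csucc_of_lt {n : ℕ} (i : Fin n) (h : (i : ℕ) + 1 < n) : csucc i = ⟨i + 1, h⟩ :=
  Fin.ext (Nat.mod_eq_of_lt h)

lemma _root_.FlipRel.exists_eq_mul_sectionSign {u : G.Walk v v} {κ : Fin u.length → ℤˣ}
    (h : FlipRel G τ u κ) : ∃ c : ℤˣ, ∀ i, κ i = c * sectionSign τ u i := by
  rcases Nat.eq_zero_or_pos u.length with hu | hu
  · exact ⟨1, fun i => absurd i.2 (by omega)⟩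
  refine ⟨κ ⟨0, hu⟩ * sectionSign τ u ⟨0, hu⟩, fun i => ?_⟩
  suffices hconst : ∀ j (hj : j < u.length),
      κ ⟨j, hj⟩ * sectionSign τ u ⟨j, hj⟩ = κ ⟨0, hu⟩ * sectionSign τ u ⟨0, hu⟩ by
    rw [← hconst i i.2, mul_assoc, Int.units_mul_self, mul_one]
  intro j hj
  induction j with
  | zero => rfl
  | succ k ih =>
    have hk : k < u.length := by omega
    rw [← ih hk, sectionSign_succ u ⟨k, hk⟩ hj, ← csucc_of_lt ⟨k, hk⟩ hj, h ⟨k, hk⟩,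
      mul_mul_mul_comm, Int.units_mul_self, one_mul]

def reverseAppendIndex (n k : ℕ) : ℕ := if k < n then n - 1 - k else k

lemma reverseAppendIndex_involutive (n : ℕ) : Function.Involutive (reverseAppendIndex n) := by
  intro k
  unfold reverseAppendIndex
  split_ifs <;> omega

lemma reverseAppendIndex_lt {n k N : ℕ} (hn : n ≤ N) (hk : k < N) :
    reverseAppendIndex n k < N := by
  unfold reverseAppendIndex
  split_ifs <;> omega

def reverseAppendEquiv (w : G.Walk v v) (w' : G.Walk v x) :
    Fin (w.reverse.append w').length ≃ Fin (w.append w').length where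
  toFun i :=
    ⟨reverseAppendIndex w.length i, reverseAppendIndex_lt (by simp) (by simpa using i.2)⟩
  invFun j :=
    ⟨reverseAppendIndex w.length j, reverseAppendIndex_lt (by simp) (by simpa using j.2)⟩
  left_inv i := Fin.ext (reverseAppendIndex_involutive _ _)
  right_inv j := Fin.ext (reverseAppendIndex_involutive _ _)

lemma dartAt_reverse_append_of_lt (w : G.Walk v v) (w' : G.Walk v x)
    (i : Fin (w.reverse.append w').length) (hi : (i : ℕ) < w.length) :
    dartAt (w.reverse.append w') i =
      (dartAt (w.append w') (reverseAppendEquiv w w' i)).symm := by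
  have hk : w.length - 1 - i < w.darts.length := by simp; omega
  simp [dartAt, reverseAppendEquiv, reverseAppendIndex, hi, List.getElem_append_left hk]

lemma dartAt_reverse_append_of_le (w : G.Walk v v) (w' : G.Walk v x)
    (i : Fin (w.reverse.append w').length) (hi : w.length ≤ i) :
    dartAt (w.reverse.append w') i = dartAt (w.append w') (reverseAppendEquiv w w' i) := by
  simp [dartAt, reverseAppendEquiv, reverseAppendIndex, not_lt.mpr hi, hi,
    List.getElem_append_right]

lemma prod_map_take_darts_append_of_le {a b c : V} (p : G.Walk a b) (q : G.Walk b c) {i : ℕ}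
    (hi : p.length ≤ i) :
    (((p.append q).darts.take i).map (dartSign τ)).prod =
      walkSign G τ p * ((q.darts.take (i - p.length)).map (dartSign τ)).prod := by
  simp [List.take_append, List.take_of_length_le, hi, walkSign_eq_prod_map_darts]

lemma sectionSign_reverse_append_of_lt (w : G.Walk v v) (w' : G.Walk v x) (hw : mu G τ w = -1)
    (i : Fin (w.reverse.append w').length) (hi : (i : ℕ) < w.length) :
    sectionSign τ (w.reverse.append w') i =
      sectionSign τ (w.append w') (reverseAppendEquiv w w' i) := by
  set k := (reverseAppendEquiv w w' i : ℕ)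
  have hk : k = w.length - 1 - i := if_pos hi
  have hkw : k < w.darts.length := by simp; omega
  have hdU : dartAt (w.append w') (reverseAppendEquiv w w' i) = w.darts[k] := by
    simp [dartAt, List.getElem_append_left hkw, k]
  have htakeR : ((w.reverse.append w').darts.take i).map (dartSign τ) =
      (w.darts.map (dartSign τ)).reverse.take (w.length - 1 - k) := by
    rw [show w.length - 1 - k = i by omega]
    simp [List.map_take, Function.comp_def, hi.le]
  have htakeU : ((w.append w').darts.take k).map (dartSign τ) =
      (w.darts.map (dartSign τ)).take k := by
    simp [List.take_append_of_le_length hkw.le, List.map_take]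
  have hprod := List.prod_take_mul_getElem_mul_prod_take_reverse (w.darts.map (dartSign τ)) k
    (by simpa using hkw)
  simp only [← walkSign_eq_prod_map_darts, List.length_map, List.getElem_map,
    Walk.length_darts] at hprod
  have hsign : (-1) ^ ((i : ℕ) + k) * walkSign G τ w = 1 := by
    rw [mu, show w.length = i + k + 1 by omega, pow_succ, mul_neg_one, neg_mul] at hw
    exact neg_inj.mp hw
  rw [← Int.units_inv_eq_self (sectionSign τ (w.append w') _)]
  refine eq_inv_of_mul_eq_one_left (Eq.trans ?_ hsign)
  rw [sectionSign, sectionSign, dartAt_reverse_append_of_lt w w' i hi, htakeR, htakeU, hdU,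
    ← hprod, pow_add]
  simp only [Dart.symm_toProd, Prod.fst_swap, Dart.edge_symm, dartSign]
  ac_rfl

lemma sectionSign_reverse_append_of_le (w : G.Walk v v) (w' : G.Walk v x)
    (i : Fin (w.reverse.append w').length) (hi : w.length ≤ i) :
    sectionSign τ (w.reverse.append w') i =
      sectionSign τ (w.append w') (reverseAppendEquiv w w' i) := by
  have hσ : (reverseAppendEquiv w w' i : ℕ) = i := if_neg (not_lt.mpr hi)
  rw [sectionSign, sectionSign, dartAt_reverse_append_of_le w w' i hi, hσ,
    prod_map_take_darts_append_of_le _ _ (by simpa using hi),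
    prod_map_take_darts_append_of_le _ _ hi, walkSign_reverse, Walk.length_reverse]

lemma sectionSign_reverse_append (w : G.Walk v v) (w' : G.Walk v x) (hw : mu G τ w = -1)
    (i : Fin (w.reverse.append w').length) :
    sectionSign τ (w.reverse.append w') i =
      sectionSign τ (w.append w') (reverseAppendEquiv w w' i) := by
  rcases lt_or_ge (i : ℕ) w.length with hi | hi
  · exact sectionSign_reverse_append_of_lt w w' hw i hi
  · exact sectionSign_reverse_append_of_le w w' i hi

lemma edge_dartAt_reverse_append (w : G.Walk v v) (w' : G.Walk v x)
    (i : Fin (w.reverse.append w').length) :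
    (dartAt (w.reverse.append w') i).edge =
      (dartAt (w.append w') (reverseAppendEquiv w w' i)).edge := by
  rcases lt_or_ge (i : ℕ) w.length with hi | hi
  · rw [dartAt_reverse_append_of_lt w w' i hi, Dart.edge_symm]
  · rw [dartAt_reverse_append_of_le w w' i hi]

lemma _root_.FlipRel.eq_or_eq_neg_comp_reverseAppendEquiv {w w' : G.Walk v v}
    (hw : mu G τ w = -1) {κ₁ : Fin (w.append w').length → ℤˣ}
    {κ₂ : Fin (w.reverse.append w').length → ℤˣ}
    (h₁ : FlipRel G τ (w.append w') κ₁) (h₂ : FlipRel G τ (w.reverse.append w') κ₂) :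
    κ₂ = κ₁ ∘ reverseAppendEquiv w w' ∨ κ₂ = -(κ₁ ∘ reverseAppendEquiv w w') := by
  obtain ⟨c₁, hc₁⟩ := h₁.exists_eq_mul_sectionSign
  obtain ⟨c₂, hc₂⟩ := h₂.exists_eq_mul_sectionSign
  have hκ : ∀ i, κ₂ i = c₂ * c₁⁻¹ * κ₁ (reverseAppendEquiv w w' i) := fun i => by
    rw [hc₂, hc₁, sectionSign_reverse_append w w' hw, mul_assoc, inv_mul_cancel_left]
  rcases Int.units_eq_one_or (c₂ * c₁⁻¹) with h | h
  · exact Or.inl (funext fun i => by rw [hκ i, h, one_mul]; rfl)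
  · exact Or.inr (funext fun i => by rw [hκ i, h, neg_one_mul]; rfl)

variable (K : Type*) [Field K]

lemma Bpos_comp_equiv {p q : G.Walk v v} (e : Fin p.length ≃ Fin q.length)
    (he : ∀ i, (dartAt p i).edge = (dartAt q (e i)).edge) (κ : Fin q.length → ℤˣ) :
    Bpos K p (κ ∘ e) = Bpos K q κ :=
  Finset.prod_equiv e (by simp) (fun i _ => by simp_rw [he])

lemma Bneg_comp_equiv {p q : G.Walk v v} (e : Fin p.length ≃ Fin q.length)
    (he : ∀ i, (dartAt p i).edge = (dartAt q (e i)).edge) (κ : Fin q.length → ℤˣ) :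
    Bneg K p (κ ∘ e) = Bneg K q κ :=
  Finset.prod_equiv e (by simp) (fun i _ => by simp_rw [he])

lemma Bpos_neg {p : G.Walk v v} (κ : Fin p.length → ℤˣ) : Bpos K p (-κ) = Bneg K p κ := by
  simp [Bpos, Bneg, neg_eq_iff_eq_neg]

lemma Bneg_neg {p : G.Walk v v} (κ : Fin p.length → ℤˣ) : Bneg K p (-κ) = Bpos K p κ := by
  simp [Bpos, Bneg, neg_eq_iff_eq_neg]

end SignedGraph

open SignedGraph in
theorem binomial_reverse_append_general (K : Type*) [Field K]
    (G : SimpleGraph V) (τ : Sym2 V → V → ℤˣ) (v : V)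
    (w w' : G.Walk v v) (hw : mu G τ w = -1) (hw' : mu G τ w' = -1) :
    mu G τ (w.append w') = 1 ∧ mu G τ (w.reverse.append w') = 1 ∧
    ∀ (κ₁ : Fin (w.append w').length → ℤˣ)
      (κ₂ : Fin (w.reverse.append w').length → ℤˣ),
      FlipRel G τ (w.append w') κ₁ → FlipRel G τ (w.reverse.append w') κ₂ →
      Bpos K (w.reverse.append w') κ₂ - Bneg K (w.reverse.append w') κ₂
          = Bpos K (w.append w') κ₁ - Bneg K (w.append w') κ₁ ∨
      Bpos K (w.reverse.append w') κ₂ - Bneg K (w.reverse.append w') κ₂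
          = -(Bpos K (w.append w') κ₁ - Bneg K (w.append w') κ₁) := by
  refine ⟨by rw [mu_append, hw, hw']; decide,
    by rw [mu_append, mu_reverse, hw, hw']; decide, fun κ₁ κ₂ h₁ h₂ => ?_⟩
  have he := edge_dartAt_reverse_append w w'
  rcases h₁.eq_or_eq_neg_comp_reverseAppendEquiv hw h₂ with rfl | rfl
  · left
    rw [Bpos_comp_equiv K _ he, Bneg_comp_equiv K _ he]
  · right
    rw [Bpos_neg, Bneg_neg, Bpos_comp_equiv K _ he, Bneg_comp_equiv K _ he, neg_sub]

/-- For two odd closed walks w and w' of a signed graph (G,τ) with the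
same first vertex, both w + w' and w⁻¹ + w' are even closed walks and their
associated binomials (each defined only up to an overall sign, i.e. up to the choice
of the section-parity assignment κ) satisfy B_{w⁻¹+w'} = ± B_{w+w'}. -/
theorem binomial_reverse_append [DecidableEq V] (K : Type*) [Field K]
    (G : SimpleGraph V) [Fintype G.edgeSet] (τ : Sym2 V → V → ℤˣ) (v : V)
    (w w' : G.Walk v v) (hw : mu G τ w = -1) (hw' : mu G τ w' = -1) :
    mu G τ (w.append w') = 1 ∧ mu G τ (w.reverse.append w') = 1 ∧
    ∀ (κ₁ : Fin (w.append w').length → ℤˣ)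
      (κ₂ : Fin (w.reverse.append w').length → ℤˣ),
      FlipRel G τ (w.append w') κ₁ → FlipRel G τ (w.reverse.append w') κ₂ →
      Bpos K (w.reverse.append w') κ₂ - Bneg K (w.reverse.append w') κ₂
          = Bpos K (w.append w') κ₁ - Bneg K (w.append w') κ₁ ∨
      Bpos K (w.reverse.append w') κ₂ - Bneg K (w.reverse.append w') κ₂
          = -(Bpos K (w.append w') κ₁ - Bneg K (w.append w') κ₁) :=
  binomial_reverse_append_general K G τ v w w' hw hw'
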